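/- arXiv:math/0702803 — 4 statements merged into one kernel-verified Lean document; each statement's English description precedes it below -/
import Mathlib

section
/- Let k, l ≥ 1, let p_1,…,p_l : ℂ^k → ℂ be homogeneous polynomials of positive degrees, and let Z ⊆ ℂ^k be their common zero set. Let V ⊆ ℂ^k be a closed subset with the property that for every sequence (w_j) in V with ‖w_j‖ → ∞ for which the normalized sequence w_j/‖w_j‖ converges to some v ∈ ℂ^k, one has v ∉ Z. Then the restriction to V of the map M := (p_1,…,p_l) : ℂ^k → ℂ^l is a proper map V → ℂ^l. -/
/-!
If the preimage of a compact `K` under `M` in `V` were unbounded, it would contain a sequence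
`w_j` with `‖w_j‖ → ∞` whose directions `w_j / ‖w_j‖` converge (compactness of the unit ball) to
some `v`. By hypothesis `v ∉ Z`, so `p_i v ≠ 0` for some `i`, and homogeneity gives
`|p_i w_j| = ‖w_j‖ ^ d_i · |p_i (w_j / ‖w_j‖)| → ∞`, contradicting `M w_j ∈ K`.
-/

open MvPolynomial Filter Topology

namespace MvPolynomial.IsHomogeneous

variable {σ : Type*} {n : ℕ}

theorem eval_smul {R : Type*} [CommSemiring R] {φ : MvPolynomial σ R}
    (hφ : φ.IsHomogeneous n) (c : R) (x : σ → R) :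
    eval (c • x) φ = c ^ n * eval x φ := by
  simp only [eval_eq, Finset.mul_sum, Pi.smul_apply, smul_eq_mul, mul_pow,
    Finset.prod_mul_distrib, Finset.prod_pow_eq_pow_sum]
  refine Finset.sum_congr rfl fun m hm => ?_
  have hdeg : ∑ i ∈ m.support, m i = n := by
    simpa [Finsupp.weight_apply, Finsupp.sum] using hφ (mem_support_iff.mp hm)
  rw [hdeg]; ring

variable {𝕜 : Type*} [RCLike 𝕜] {φ : MvPolynomial σ 𝕜}

theorem norm_eval_real_smul (hφ : φ.IsHomogeneous n) {r : ℝ} (hr : 0 ≤ r) (x : σ → 𝕜) :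
    ‖eval (r • x) φ‖ = r ^ n * ‖eval x φ‖ := by
  rw [RCLike.real_smul_eq_coe_smul (K := 𝕜), hφ.eval_smul, norm_mul, norm_pow,
    RCLike.norm_of_nonneg hr]

theorem tendsto_norm_eval_atTop [Fintype σ] (hφ : φ.IsHomogeneous n) (hn : 0 < n)
    {ι : Type*} {l : Filter ι} {w : ι → σ → 𝕜} {v : σ → 𝕜}
    (hw : Tendsto (fun j => ‖w j‖) l atTop)
    (hdir : Tendsto (fun j => ‖w j‖⁻¹ • w j) l (𝓝 v)) (hv : eval v φ ≠ 0) :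
    Tendsto (fun j => ‖eval (w j) φ‖) l atTop := by
  have hscaled : Tendsto (fun j => ‖w j‖ ^ n * ‖eval (‖w j‖⁻¹ • w j) φ‖) l atTop :=
    ((tendsto_pow_atTop hn.ne').comp hw).atTop_mul_pos (norm_pos_iff.mpr hv)
      ((φ.continuous_eval.norm.tendsto v).comp hdir)
  refine hscaled.congr' ((hw.eventually_gt_atTop 0).mono fun j hj => ?_)
  rw [← hφ.norm_eval_real_smul (norm_nonneg _), smul_inv_smul₀ hj.ne']

end MvPolynomial.IsHomogeneous

theorem exists_seq_tendsto_norm_atTop_of_not_isBounded {E : Type*} [NormedAddCommGroup E]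
    [NormedSpace ℝ E] [ProperSpace E] {S : Set E} (hS : ¬Bornology.IsBounded S) :
    ∃ w : ℕ → E, (∀ j, w j ∈ S) ∧ Tendsto (fun j => ‖w j‖) atTop atTop ∧
      ∃ v, Tendsto (fun j => ‖w j‖⁻¹ • w j) atTop (𝓝 v) := by
  simp only [isBounded_iff_forall_norm_le, not_exists, not_forall, not_le] at hS
  choose w hwS hw using fun j : ℕ => hS j
  have hnorm : Tendsto (fun j : ℕ => ‖w j‖) atTop atTop :=
    tendsto_atTop_mono (fun j => (hw j).le) tendsto_natCast_atTop_atTop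
  have hball : ∀ j : ℕ, ‖w j‖⁻¹ • w j ∈ Metric.closedBall (0 : E) 1 := fun j => by
    rw [mem_closedBall_zero_iff, norm_smul, norm_inv, norm_norm]
    exact inv_mul_le_one
  obtain ⟨v, -, ψ, hψ, hv⟩ := (isCompact_closedBall (0 : E) 1).tendsto_subseq hball
  exact ⟨w ∘ ψ, fun j => hwS _, hnorm.comp hψ.tendsto_atTop, v, hv⟩

theorem homogeneous_map_restriction_proper_general
    (k l : ℕ)
    (p : Fin l → MvPolynomial (Fin k) ℂ) (d : Fin l → ℕ)
    (hd : ∀ i, 0 < d i) (hhom : ∀ i, (p i).IsHomogeneous (d i))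
    (Z : Set (Fin k → ℂ)) (hZ : Z = {w : Fin k → ℂ | ∀ i, eval w (p i) = 0})
    (V : Set (Fin k → ℂ)) (hVclosed : IsClosed V)
    (hdir : ∀ w : ℕ → (Fin k → ℂ), (∀ j, w j ∈ V) →
      Tendsto (fun j => ‖w j‖) atTop atTop →
      ∀ v : Fin k → ℂ, Tendsto (fun j => (‖w j‖)⁻¹ • w j) atTop (𝓝 v) → v ∉ Z) :
    ∀ K : Set (Fin l → ℂ), IsCompact K →
      IsCompact {w : Fin k → ℂ | w ∈ V ∧ (fun i => eval w (p i)) ∈ K} := by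
  intro K hK
  have hM : Continuous fun w : Fin k → ℂ => fun i => eval w (p i) :=
    continuous_pi fun i => (p i).continuous_eval
  refine Metric.isCompact_of_isClosed_isBounded (hVclosed.inter (hK.isClosed.preimage hM)) ?_
  by_contra hunbdd
  obtain ⟨w, hwS, hw, v, hv⟩ := exists_seq_tendsto_norm_atTop_of_not_isBounded hunbdd
  obtain ⟨i, hi⟩ : ∃ i, eval v (p i) ≠ 0 := by
    simpa [hZ] using hdir w (fun j => (hwS j).1) hw v hv
  obtain ⟨C, hC⟩ := hK.isBounded.exists_norm_le
  obtain ⟨j, hj⟩ :=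
    (((hhom i).tendsto_norm_eval_atTop (hd i) hw hv hi).eventually_gt_atTop C).exists
  exact hj.not_ge ((norm_le_pi_norm _ i).trans (hC _ (hwS j).2))

/-- **Lemma 5.2.** Let `p₁,…,p_l` be homogeneous polynomials on `ℂ^k` of positive
degrees with common zero set `Z`, and let `V ⊆ ℂ^k` be a closed set such that every
limit direction at infinity of `V` avoids `Z` (i.e. if `(w_j) ⊆ V`, `‖w_j‖ → ∞` and
`w_j/‖w_j‖ → v`, then `v ∉ Z`).  Then the restriction to `V` of
`M = (p₁,…,p_l) : ℂ^k → ℂ^l` is proper: for every compact `K ⊆ ℂ^l` the set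
`{w ∈ V : M w ∈ K}` is compact. -/
theorem homogeneous_map_restriction_proper
    (k l : ℕ) (hk : 1 ≤ k) (hl : 1 ≤ l)
    (p : Fin l → MvPolynomial (Fin k) ℂ) (d : Fin l → ℕ)
    (hd : ∀ i, 0 < d i) (hhom : ∀ i, (p i).IsHomogeneous (d i))
    (Z : Set (Fin k → ℂ)) (hZ : Z = {w : Fin k → ℂ | ∀ i, eval w (p i) = 0})
    (V : Set (Fin k → ℂ)) (hVclosed : IsClosed V)
    (hdir : ∀ w : ℕ → (Fin k → ℂ), (∀ j, w j ∈ V) →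
      Tendsto (fun j => ‖w j‖) atTop atTop →
      ∀ v : Fin k → ℂ, Tendsto (fun j => (‖w j‖)⁻¹ • w j) atTop (𝓝 v) → v ∉ Z) :
    ∀ K : Set (Fin l → ℂ), IsCompact K →
      IsCompact {w : Fin k → ℂ | w ∈ V ∧ (fun i => eval w (p i)) ∈ K} :=
  homogeneous_map_restriction_proper_general k l p d hd hhom Z hZ V hVclosed hdir
end

section
/- Fix a real number T > 0 and an integer n ≥ 1, and let a = (a_1,…,a_n) be a tuple of continuous functions [0,T] → ℂ. If every basic iterated integral of a vanishes, i.e., I_{i_1,…,i_m}(a) = 0 for every m ≥ 1 and all indices i_1,…,i_m ∈ {1,…,n}, then the equation E(a) determines a center. -/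
open MeasureTheory Set Filter Topology

noncomputable section

/-- Iterated integral over the simplex `0 ≤ s₁ ≤ … ≤ s_m ≤ x`; the head of the
list is attached to the outermost (largest) variable. -/
def simplexInt : List (ℝ → ℂ) → ℝ → ℂ
  | [] => fun _ => 1
  | f :: fs => fun x => ∫ s in (0:ℝ)..x, f s * simplexInt fs s

/-- The basic iterated integral `I_{i₁,…,i_m}(a)`. -/
def iterInt (T : ℝ) {n : ℕ} (a : Fin n → ℝ → ℂ) (l : List (Fin n)) : ℂ :=
  simplexInt ((l.map a).reverse) T

/-- `ã(x) = ∫_0^x a(s) ds`. -/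
def primitive (a : ℝ → ℂ) (x : ℝ) : ℂ := ∫ s in (0:ℝ)..x, a s

/-- The moment `m^{n₁,…,n_j}_{i₁,…,i_{j+1}}(a)`, encoded by the list
`ps = [(i₁,n₁),…,(i_j,n_j)]` of index/exponent pairs and the final index `i`. -/
def moment (T : ℝ) {n : ℕ} (a : Fin n → ℝ → ℂ) (ps : List (Fin n × ℕ)) (i : Fin n) : ℂ :=
  ∫ s in (0:ℝ)..T, (ps.map fun q => primitive (a q.1) s ^ q.2).prod * a i s

/-- A function is admissible if on `[0,T]` it is a polynomial in `x`
or a finite linear combination of the exponentials `e^{2πijx/T}`, `j ∈ ℤ`. -/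
def Admissible (T : ℝ) (f : ℝ → ℂ) : Prop :=
  (∃ p : Polynomial ℂ, ∀ x ∈ Icc (0:ℝ) T, f x = p.eval (x : ℂ)) ∨
  (∃ (s : Finset ℤ) (c : ℤ → ℂ), ∀ x ∈ Icc (0:ℝ) T,
    f x = ∑ j ∈ s, c j * Complex.exp (2 * (Real.pi : ℂ) * Complex.I * (j : ℂ) * (x : ℂ) / (T : ℂ)))

/-- The equation `dv/dx = Σ_{i=1}^n a_i(x) v^{i+1}` determines a center. -/
def DeterminesCenter (T : ℝ) {n : ℕ} (a : Fin n → ℝ → ℂ) : Prop :=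
  ∃ ε > (0:ℝ), ∀ v : ℝ → ℂ,
    (∀ x ∈ Icc (0:ℝ) T, v x = v 0 + ∫ s in (0:ℝ)..x, ∑ i, a i s * v s ^ ((i : ℕ) + 2)) →
    ‖v 0‖ < ε → v T = v 0

/-!
The Picard iterates `p₀ = c`, `pₖ₊₁(x) = c + ∫₀ˣ Σᵢ aᵢ pₖ^(i+2)` of `E(a)` all lie in the linear
span of the iterated integrals `x ↦ I_w(a)(x)`. This span is an algebra: by integration by parts
the product of two iterated integrals is a sum of iterated integrals (the shuffle relation). Hence
`pₖ₊₁(T) - c` is a linear combination of basic iterated integrals and vanishes. For small `|v(0)|`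
the right-hand side is a contraction on a small ball over `[0, T]`, so the solution `v` is the
uniform limit of the Picard iterates and `v(T) = v(0)`.
-/

theorem norm_pow_succ_sub_pow_succ_le {R : Type*} [SeminormedRing R] [NormOneClass R] {z w : R}
    {r : ℝ} (hz : ‖z‖ ≤ r) (hw : ‖w‖ ≤ r) (k : ℕ) :
    ‖z ^ (k + 1) - w ^ (k + 1)‖ ≤ (k + 1) * r ^ k * ‖z - w‖ := by
  have hr : 0 ≤ r := (norm_nonneg z).trans hz
  induction k with
  | zero => simp
  | succ k ih =>
    have hwk : ‖(z - w) * w ^ (k + 1)‖ ≤ ‖z - w‖ * r ^ (k + 1) :=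
      (norm_mul_le _ _).trans <| mul_le_mul_of_nonneg_left
        ((norm_pow_le _ _).trans (pow_le_pow_left₀ (norm_nonneg w) hw _)) (norm_nonneg _)
    have hzk : ‖z * (z ^ (k + 1) - w ^ (k + 1))‖ ≤ r * ((k + 1) * r ^ k * ‖z - w‖) :=
      (norm_mul_le _ _).trans <| mul_le_mul hz ih (norm_nonneg _) hr
    calc ‖z ^ (k + 1 + 1) - w ^ (k + 1 + 1)‖
        = ‖z * (z ^ (k + 1) - w ^ (k + 1)) + (z - w) * w ^ (k + 1)‖ := by
          rw [pow_succ' z, pow_succ' w, mul_sub, sub_mul]; abel_nf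
      _ ≤ r * ((k + 1) * r ^ k * ‖z - w‖) + ‖z - w‖ * r ^ (k + 1) :=
        (norm_add_le _ _).trans (add_le_add hzk hwk)
      _ = ((k + 1 : ℕ) + 1) * r ^ (k + 1) * ‖z - w‖ := by push_cast; ring

namespace ContinuousMap

def primitiveₗ : C(ℝ, ℂ) →ₗ[ℂ] C(ℝ, ℂ) where
  toFun F := ⟨primitive F, intervalIntegral.continuous_primitive
    (fun _ _ => F.continuous.intervalIntegrable _ _) 0⟩
  map_add' F G := by
    ext x
    exact intervalIntegral.integral_add (F.continuous.intervalIntegrable _ _)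
      (G.continuous.intervalIntegrable _ _)
  map_smul' c F := by
    ext x
    exact intervalIntegral.integral_smul c _

theorem primitiveₗ_apply (F : C(ℝ, ℂ)) (x : ℝ) : primitiveₗ F x = ∫ s in (0:ℝ)..x, F s := rfl

theorem hasDerivAt_primitiveₗ (F : C(ℝ, ℂ)) (x : ℝ) : HasDerivAt (primitiveₗ F) (F x) x :=
  (F.continuous.integral_hasStrictDerivAt 0 x).hasDerivAt

theorem eq_primitiveₗ_of_hasDerivAt {H F : C(ℝ, ℂ)} (hH : ∀ x, HasDerivAt H (F x) x)
    (h0 : H 0 = 0) : H = primitiveₗ F := by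
  ext x
  rw [primitiveₗ_apply, intervalIntegral.integral_eq_sub_of_hasDerivAt (fun y _ => hH y)
    (F.continuous.intervalIntegrable _ _), h0, sub_zero]

theorem primitiveₗ_mul_primitiveₗ (F G : C(ℝ, ℂ)) :
    primitiveₗ F * primitiveₗ G = primitiveₗ (F * primitiveₗ G + primitiveₗ F * G) := by
  refine eq_primitiveₗ_of_hasDerivAt (fun x => ?_) (by simp [primitiveₗ_apply])
  simpa [add_comm, mul_comm] using (hasDerivAt_primitiveₗ F x).mul (hasDerivAt_primitiveₗ G x)

end ContinuousMap

open ContinuousMap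

section IteratedPrimitive

variable {ι : Type*} (b : ι → C(ℝ, ℂ))

def iteratedPrimitive : List ι → C(ℝ, ℂ)
  | [] => 1
  | i :: w => primitiveₗ (b i * iteratedPrimitive w)

theorem coe_iteratedPrimitive (w : List ι) :
    ⇑(iteratedPrimitive b w) = simplexInt (w.map fun i => ⇑(b i)) := by
  induction w with
  | nil => rfl
  | cons i w ih =>
    ext x
    simp [iteratedPrimitive, simplexInt, primitiveₗ_apply, ih]

def iteratedPrimitiveSpan : Submodule ℂ C(ℝ, ℂ) :=
  Submodule.span ℂ (range (iteratedPrimitive b))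

theorem iteratedPrimitive_mem_iteratedPrimitiveSpan (w : List ι) :
    iteratedPrimitive b w ∈ iteratedPrimitiveSpan b :=
  Submodule.subset_span (mem_range_self w)

theorem primitiveₗ_mul_mem_iteratedPrimitiveSpan (i : ι) {F : C(ℝ, ℂ)}
    (hF : F ∈ iteratedPrimitiveSpan b) :
    primitiveₗ (b i * F) ∈ iteratedPrimitiveSpan b := by
  have hmap : (iteratedPrimitiveSpan b).map (primitiveₗ ∘ₗ LinearMap.mulLeft ℂ (b i)) ≤
      iteratedPrimitiveSpan b := by
    refine (Submodule.map_span_le _ _ _).mpr ?_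
    rintro _ ⟨w, rfl⟩
    exact Submodule.subset_span ⟨i :: w, rfl⟩
  exact hmap ⟨F, hF, rfl⟩

theorem iteratedPrimitive_mul_mem_iteratedPrimitiveSpan (u w : List ι) :
    iteratedPrimitive b u * iteratedPrimitive b w ∈ iteratedPrimitiveSpan b := by
  induction u generalizing w with
  | nil =>
    simpa only [iteratedPrimitive, one_mul] using iteratedPrimitive_mem_iteratedPrimitiveSpan b w
  | cons i u ihu =>
    induction w with
    | nil =>
      simpa only [iteratedPrimitive.eq_1, mul_one] using
        iteratedPrimitive_mem_iteratedPrimitiveSpan b (i :: u)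
    | cons j w ihw =>
      have hshuffle : iteratedPrimitive b (i :: u) * iteratedPrimitive b (j :: w) =
          primitiveₗ (b i * (iteratedPrimitive b u * iteratedPrimitive b (j :: w))) +
          primitiveₗ (b j * (iteratedPrimitive b (i :: u) * iteratedPrimitive b w)) := by
        rw [← map_add]
        simp only [iteratedPrimitive, primitiveₗ_mul_primitiveₗ]
        congr 1
        ring
      rw [hshuffle]
      exact add_mem (primitiveₗ_mul_mem_iteratedPrimitiveSpan b i (ihu _))
        (primitiveₗ_mul_mem_iteratedPrimitiveSpan b j ihw)

def iteratedPrimitiveAlgebra : Subalgebra ℂ C(ℝ, ℂ) :=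
  (iteratedPrimitiveSpan b).toSubalgebra (Submodule.subset_span ⟨[], rfl⟩) fun F G hF hG => by
    have hFG := Submodule.mul_mem_mul hF hG
    rw [iteratedPrimitiveSpan, Submodule.span_mul_span] at hFG
    refine Submodule.span_le.mpr ?_ hFG
    rintro _ ⟨_, ⟨u, rfl⟩, _, ⟨w, rfl⟩, rfl⟩
    exact iteratedPrimitive_mul_mem_iteratedPrimitiveSpan b u w

theorem primitiveₗ_mul_apply_eq_zero {T : ℝ}
    (hT : ∀ w, w ≠ [] → iteratedPrimitive b w T = 0) (i : ι) {F : C(ℝ, ℂ)}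
    (hF : F ∈ iteratedPrimitiveAlgebra b) : primitiveₗ (b i * F) T = 0 := by
  have hker : iteratedPrimitiveSpan b ≤ LinearMap.ker
      ((evalCLM (R := ℂ) T).toLinearMap ∘ₗ primitiveₗ ∘ₗ LinearMap.mulLeft ℂ (b i)) :=
    Submodule.span_le.mpr <| by
      rintro _ ⟨w, rfl⟩
      exact hT (i :: w) (List.cons_ne_nil i w)
  exact hker hF

end IteratedPrimitive

section PicardIteration

variable {E : Type*} [NormedAddCommGroup E] [NormedSpace ℝ E]

def picardIter (f : ℝ → E → E) (c : E) : ℕ → ℝ → E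
  | 0 => fun _ => c
  | k + 1 => fun x => c + ∫ s in (0:ℝ)..x, f s (picardIter f c k s)

variable {f : ℝ → E → E} {T R K L : ℝ}

theorem continuous_picardIter (hf : Continuous (Function.uncurry f)) (c : E)
    (k : ℕ) : Continuous (picardIter f c k) := by
  induction k with
  | zero => exact continuous_const
  | succ k ih =>
    exact continuous_const.add <| intervalIntegral.continuous_primitive
      (fun _ _ => (hf.comp (continuous_id.prodMk ih)).intervalIntegrable _ _) 0

theorem norm_lt_of_eq_add_integral {g v : ℝ → E} (hK : 0 ≤ K)
    (hv : ∀ x ∈ Icc 0 T, v x = v 0 + ∫ s in (0:ℝ)..x, g s)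
    (hg_int : IntervalIntegrable g volume 0 T)
    (hg : ∀ s ∈ Icc 0 T, ‖v s‖ < R → ‖g s‖ ≤ K) (hR : ‖v 0‖ + K * T < R) :
    ∀ x ∈ Icc 0 T, ‖v x‖ < R := by
  by_contra! ⟨x₀, hx₀, hRx₀⟩
  have hT : 0 ≤ T := hx₀.1.trans hx₀.2
  have hv_cont : ContinuousOn v (Icc 0 T) := by
    have hprim := intervalIntegral.continuousOn_primitive_interval' hg_int left_mem_uIcc
    rw [uIcc_of_le hT] at hprim
    exact (continuousOn_const.add hprim).congr hv
  set B := Icc 0 T ∩ (fun x => ‖v x‖) ⁻¹' Ici R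
  have hB_closed : IsClosed B :=
    hv_cont.norm.preimage_isClosed_of_isClosed isClosed_Icc isClosed_Ici
  have hm : sInf B ∈ B := hB_closed.csInf_mem ⟨x₀, hx₀, hRx₀⟩ ⟨0, fun y hy => hy.1.1⟩
  set m := sInf B
  have hm_int : ‖∫ s in (0:ℝ)..m, g s‖ ≤ K * |m - 0| := by
    refine intervalIntegral.norm_integral_le_of_norm_le_const_ae ?_
    filter_upwards [Measure.ae_ne volume m] with s hsm hs
    rw [uIoc_of_le hm.1.1] at hs
    refine hg s ⟨hs.1.le, hs.2.trans hm.1.2⟩ (not_le.mp fun hRs => ?_)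
    exact (lt_of_le_of_ne hs.2 hsm).not_ge (csInf_le ⟨0, fun y hy => hy.1.1⟩
      ⟨⟨hs.1.le, hs.2.trans hm.1.2⟩, hRs⟩)
  have : ‖v m‖ < R := by
    rw [sub_zero, abs_of_nonneg hm.1.1] at hm_int
    rw [hv m hm.1]
    calc ‖v 0 + ∫ s in (0:ℝ)..m, g s‖ ≤ ‖v 0‖ + K * m := (norm_add_le _ _).trans (by linarith)
      _ ≤ ‖v 0‖ + K * T := by gcongr; exact hm.1.2
      _ < R := hR
  exact this.not_ge hm.2

theorem norm_picardIter_le (hK : 0 ≤ K)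
    (hfK : ∀ s ∈ Icc 0 T, ∀ z, ‖z‖ ≤ R → ‖f s z‖ ≤ K) {c : E} (hc : ‖c‖ + K * T ≤ R) (k : ℕ) :
    ∀ x ∈ Icc 0 T, ‖picardIter f c k x‖ ≤ R := by
  induction k with
  | zero => intro x hx; simp only [picardIter]; nlinarith [hx.1.trans hx.2]
  | succ k ih =>
    intro x hx
    have hint : ‖∫ s in (0:ℝ)..x, f s (picardIter f c k s)‖ ≤ K * |x - 0| := by
      refine intervalIntegral.norm_integral_le_of_norm_le_const fun s hs => ?_
      rw [uIoc_of_le hx.1] at hs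
      have hs' : s ∈ Icc 0 T := ⟨hs.1.le, hs.2.trans hx.2⟩
      exact hfK s hs' _ (ih s hs')
    rw [sub_zero, abs_of_nonneg hx.1] at hint
    calc ‖c + ∫ s in (0:ℝ)..x, f s (picardIter f c k s)‖ ≤ ‖c‖ + K * x :=
          (norm_add_le _ _).trans (by linarith)
      _ ≤ R := by nlinarith [hx.2]

theorem norm_sub_picardIter_le (hf : Continuous (Function.uncurry f)) (hL : 0 ≤ L)
    (hLip : ∀ s ∈ Icc 0 T, ∀ z w, ‖z‖ ≤ R → ‖w‖ ≤ R → ‖f s z - f s w‖ ≤ L * ‖z - w‖)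
    (hLT : L * T ≤ 1 / 2) {v : ℝ → E}
    (hv : ∀ x ∈ Icc 0 T, v x = v 0 + ∫ s in (0:ℝ)..x, f s (v s))
    (hv_int : IntervalIntegrable (fun s => f s (v s)) volume 0 T)
    (hvR : ∀ x ∈ Icc 0 T, ‖v x‖ ≤ R) (hpR : ∀ k, ∀ x ∈ Icc 0 T, ‖picardIter f (v 0) k x‖ ≤ R)
    (k : ℕ) : ∀ x ∈ Icc 0 T, ‖v x - picardIter f (v 0) k x‖ ≤ 2 * R * (1 / 2) ^ k := by
  induction k with
  | zero =>
    intro x hx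
    have h0 : (0:ℝ) ∈ Icc 0 T := ⟨le_rfl, hx.1.trans hx.2⟩
    simpa [picardIter, two_mul] using (norm_sub_le _ _).trans (add_le_add (hvR x hx) (hvR 0 h0))
  | succ k ih =>
    intro x hx
    have hdiff : v x - picardIter f (v 0) (k + 1) x =
        ∫ s in (0:ℝ)..x, (f s (v s) - f s (picardIter f (v 0) k s)) := by
      have hp_int : IntervalIntegrable (fun s => f s (picardIter f (v 0) k s)) volume 0 x :=
        (hf.comp (continuous_id.prodMk (continuous_picardIter hf _ k))).intervalIntegrable _ _
      rw [intervalIntegral.integral_sub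
        (hv_int.mono_set (uIcc_subset_uIcc_left (by rwa [uIcc_of_le (hx.1.trans hx.2)])))
        hp_int, hv x hx]
      simp [picardIter]
    set δ := 2 * R * (1 / 2 : ℝ) ^ k
    have hint : ‖∫ s in (0:ℝ)..x, (f s (v s) - f s (picardIter f (v 0) k s))‖ ≤
        L * δ * |x - 0| := by
      refine intervalIntegral.norm_integral_le_of_norm_le_const fun s hs => ?_
      rw [uIoc_of_le hx.1] at hs
      have hs' : s ∈ Icc 0 T := ⟨hs.1.le, hs.2.trans hx.2⟩
      exact (hLip s hs' _ _ (hvR s hs') (hpR k s hs')).trans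
        (mul_le_mul_of_nonneg_left (ih s hs') hL)
    rw [sub_zero, abs_of_nonneg hx.1] at hint
    have hδ : 0 ≤ δ := (norm_nonneg _).trans (ih x hx)
    rw [hdiff]
    calc _ ≤ L * δ * x := hint
      _ ≤ L * δ * T := mul_le_mul_of_nonneg_left hx.2 (mul_nonneg hL hδ)
      _ = L * T * δ := by ring
      _ ≤ 1 / 2 * δ := by gcongr
      _ = 2 * R * (1 / 2) ^ (k + 1) := by ring

theorem tendsto_picardIter (hf : Continuous (Function.uncurry f)) (hL : 0 ≤ L)
    (hLip : ∀ s ∈ Icc 0 T, ∀ z w, ‖z‖ ≤ R → ‖w‖ ≤ R → ‖f s z - f s w‖ ≤ L * ‖z - w‖)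
    (hf0 : ∀ s ∈ Icc 0 T, f s 0 = 0) (hLT : L * T ≤ 1 / 2) {v : ℝ → E}
    (hv : ∀ x ∈ Icc 0 T, v x = v 0 + ∫ s in (0:ℝ)..x, f s (v s))
    (hv_int : IntervalIntegrable (fun s => f s (v s)) volume 0 T) (hv0 : 2 * ‖v 0‖ < R)
    {x : ℝ} (hx : x ∈ Icc 0 T) :
    Tendsto (fun k => picardIter f (v 0) k x) atTop (𝓝 (v x)) := by
  have hT : 0 ≤ T := hx.1.trans hx.2
  have hR : 0 ≤ R := by linarith [norm_nonneg (v 0)]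
  have hfK : ∀ s ∈ Icc 0 T, ∀ z, ‖z‖ ≤ R → ‖f s z‖ ≤ L * R := fun s hs z hz => by
    simpa [hf0 s hs] using (hLip s hs z 0 hz (by simpa using hR)).trans
      (mul_le_mul_of_nonneg_left (by simpa using hz) hL)
  have hLRT : L * R * T ≤ R / 2 := by nlinarith
  have hvR : ∀ x ∈ Icc 0 T, ‖v x‖ ≤ R := fun x hx =>
    (norm_lt_of_eq_add_integral (mul_nonneg hL hR) hv hv_int
      (fun s hs hlt => hfK s hs _ hlt.le) (by linarith) x hx).le
  have hdist := norm_sub_picardIter_le hf hL hLip hLT hv hv_int hvR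
    (norm_picardIter_le (mul_nonneg hL hR) hfK (by linarith))
  rw [tendsto_iff_norm_sub_tendsto_zero]
  refine squeeze_zero (fun _ => norm_nonneg _)
    (fun k => (norm_sub_rev _ _).trans_le (hdist k x hx)) ?_
  simpa using (tendsto_pow_atTop_nhds_zero_of_lt_one (by norm_num) one_half_lt_one).const_mul
    (2 * R)

end PicardIteration

section PolynomialField

variable {ι : Type*} [Fintype ι] (b : ι → C(ℝ, ℂ)) (e : ι → ℕ)

def polyField (s : ℝ) (z : ℂ) : ℂ := ∑ i, b i s * z ^ e i

theorem continuous_uncurry_polyField : Continuous (Function.uncurry (polyField b e)) :=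
  continuous_finsetSum _ fun i _ =>
    ((b i).continuous.comp continuous_fst).mul (continuous_snd.pow (e i))

theorem picardIter_polyField_succ {c : ℂ} {k : ℕ} {F : C(ℝ, ℂ)}
    (hF : ⇑F = picardIter (polyField b e) c k) :
    picardIter (polyField b e) c (k + 1) =
      ⇑(algebraMap ℂ C(ℝ, ℂ) c + ∑ i, primitiveₗ (b i * F ^ e i)) := by
  ext x
  simp only [picardIter, polyField, ← hF]
  have hint (i : ι) : IntervalIntegrable (fun s => b i s * F s ^ e i) volume 0 x :=
    ((b i).continuous.mul (F.continuous.pow _)).intervalIntegrable _ _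
  rw [intervalIntegral.integral_finsetSum fun i _ => hint i]
  simp [primitiveₗ_apply]

theorem exists_mem_iteratedPrimitiveAlgebra_coe_eq_picardIter (c : ℂ) (k : ℕ) :
    ∃ F ∈ iteratedPrimitiveAlgebra b, ⇑F = picardIter (polyField b e) c k := by
  induction k with
  | zero => exact ⟨algebraMap ℂ _ c, Subalgebra.algebraMap_mem _ c, rfl⟩
  | succ k ih =>
    obtain ⟨F, hF, hFk⟩ := ih
    refine ⟨_, ?_, (picardIter_polyField_succ b e hFk).symm⟩
    exact add_mem (Subalgebra.algebraMap_mem _ c) (sum_mem fun i _ =>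
      primitiveₗ_mul_mem_iteratedPrimitiveSpan b i (pow_mem hF (e i)))

theorem picardIter_polyField_apply_eq_self {T : ℝ}
    (hT : ∀ w, w ≠ [] → iteratedPrimitive b w T = 0) (c : ℂ) (k : ℕ) :
    picardIter (polyField b e) c k T = c := by
  cases k with
  | zero => rfl
  | succ k =>
    obtain ⟨F, hF, hFk⟩ := exists_mem_iteratedPrimitiveAlgebra_coe_eq_picardIter b e c k
    rw [picardIter_polyField_succ b e hFk]
    simp [primitiveₗ_mul_apply_eq_zero b hT _ (pow_mem hF _)]

end PolynomialField

theorem norm_polyField_sub_le {n : ℕ} (b : Fin n → C(ℝ, ℂ)) {s M r : ℝ}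
    (hb : ∀ i, ‖b i s‖ ≤ M) (hr : r ≤ 1) {z w : ℂ} (hz : ‖z‖ ≤ r) (hw : ‖w‖ ≤ r) :
    ‖polyField b (fun i => (i : ℕ) + 2) s z - polyField b (fun i => (i : ℕ) + 2) s w‖ ≤
      n * M * (n + 1) * r * ‖z - w‖ := by
  have hr0 : 0 ≤ r := (norm_nonneg z).trans hz
  have hterm : ∀ i : Fin n, ‖b i s * z ^ ((i : ℕ) + 2) - b i s * w ^ ((i : ℕ) + 2)‖ ≤
      M * (n + 1) * r * ‖z - w‖ := fun i => by
    have hpow := norm_pow_succ_sub_pow_succ_le hz hw ((i : ℕ) + 1)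
    have hi : ((i : ℕ) : ℝ) + 1 + 1 ≤ n + 1 := by
      have : ((i : ℕ) : ℝ) + 1 ≤ n := by exact_mod_cast i.isLt
      linarith
    have hri : r ^ ((i : ℕ) + 1) ≤ r := pow_le_of_le_one hr0 hr (by omega)
    rw [← mul_sub, norm_mul]
    calc ‖b i s‖ * ‖z ^ ((i : ℕ) + 2) - w ^ ((i : ℕ) + 2)‖
        ≤ M * ((n + 1) * r * ‖z - w‖) := by
          refine mul_le_mul (hb i) (hpow.trans ?_) (norm_nonneg _) ((norm_nonneg _).trans (hb i))
          push_cast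
          gcongr
      _ = M * (n + 1) * r * ‖z - w‖ := by ring
  calc _ = ‖∑ i, (b i s * z ^ ((i : ℕ) + 2) - b i s * w ^ ((i : ℕ) + 2))‖ := by
        rw [polyField, polyField, Finset.sum_sub_distrib]
    _ ≤ ∑ i : Fin n, M * (n + 1) * r * ‖z - w‖ := norm_sum_le_of_le _ fun i _ => hterm i
    _ = n * M * (n + 1) * r * ‖z - w‖ := by simp; ring

theorem eqOn_simplexInt_map {ι : Type*} {f g : ι → ℝ → ℂ} {T : ℝ}
    (h : ∀ i, EqOn (f i) (g i) (Icc 0 T)) (w : List ι) :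
    EqOn (simplexInt (w.map f)) (simplexInt (w.map g)) (Icc 0 T) := by
  induction w with
  | nil => exact fun _ _ => rfl
  | cons i w ih =>
    intro x hx
    refine intervalIntegral.integral_congr fun s hs => ?_
    have hs' : s ∈ Icc 0 T := uIcc_subset_Icc (left_mem_Icc.2 (hx.1.trans hx.2)) hx hs
    simp only [h i hs', ih hs']

theorem exists_continuousMap_eqOn_of_continuousOn {ι : Type*} [Fintype ι] {a : ι → ℝ → ℂ}
    {T : ℝ} (hT : 0 ≤ T) (ha : ∀ i, ContinuousOn (a i) (Icc 0 T)) :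
    ∃ (b : ι → C(ℝ, ℂ)) (M : ℝ), 0 ≤ M ∧ (∀ i, EqOn (b i) (a i) (Icc 0 T)) ∧
      ∀ i, ∀ s ∈ Icc 0 T, ‖b i s‖ ≤ M := by
  set b : ι → C(ℝ, ℂ) := fun i => IccExtend hT ⟨_, (ha i).domRestrict⟩
  have hb : Continuous fun s i => b i s := continuous_pi fun i => (b i).continuous
  obtain ⟨M, hM⟩ := isCompact_Icc.exists_bound_of_continuousOn (hb.continuousOn (s := Icc 0 T))
  refine ⟨b, M, (norm_nonneg _).trans (hM 0 (left_mem_Icc.2 hT)), fun i s hs => ?_,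
    fun i s hs => (norm_le_pi_norm (fun i => b i s) i).trans (hM s hs)⟩
  simp [b, IccExtend_of_mem hT _ hs]

theorem exists_pos_le_one_mul_le_half {K T : ℝ} (hK : 0 ≤ K) (hT : 0 ≤ T) :
    ∃ R, 0 < R ∧ R ≤ 1 ∧ K * R * T ≤ 1 / 2 := by
  have hKT : 0 ≤ K * T := mul_nonneg hK hT
  refine ⟨(2 * (K * T) + 1)⁻¹, by positivity, inv_le_one_of_one_le₀ (by linarith), ?_⟩
  rw [mul_right_comm, ← div_eq_mul_inv, div_le_iff₀ (by positivity)]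
  linarith

theorem universal_center_is_center_general
    (T : ℝ) (hT : 0 < T) (n : ℕ)
    (a : Fin n → ℝ → ℂ) (ha : ∀ i, ContinuousOn (a i) (Icc (0:ℝ) T))
    (hI : ∀ l : List (Fin n), l ≠ [] → iterInt T a l = 0) :
    DeterminesCenter T a := by
  obtain ⟨b, M, hM, hba, hbM⟩ := exists_continuousMap_eqOn_of_continuousOn hT.le ha
  have hbT : ∀ w, w ≠ [] → iteratedPrimitive b w T = 0 := fun w hw => by
    rw [coe_iteratedPrimitive, eqOn_simplexInt_map hba w ⟨hT.le, le_rfl⟩, ← hI w.reverse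
      (List.reverse_ne_nil_iff.mpr hw), iterInt, List.map_reverse, List.reverse_reverse]
  set f := polyField b fun i => (i : ℕ) + 2
  obtain ⟨R, hR, hR1, hRT⟩ := exists_pos_le_one_mul_le_half (K := n * M * (n + 1)) (by positivity)
    hT.le
  refine ⟨R / 2, by positivity, fun v hv hv0 => ?_⟩
  have hv' : ∀ x ∈ Icc 0 T, v x = v 0 + ∫ s in (0:ℝ)..x, f s (v s) := fun x hx => by
    rw [hv x hx]
    congr 1
    refine intervalIntegral.integral_congr fun s hs => ?_
    have hs' : s ∈ Icc 0 T := uIcc_subset_Icc (left_mem_Icc.2 hT.le) hx hs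
    simp [f, polyField, hba _ hs']
  -- Off the integrable case, the integral has the junk value `0`, so `v T = v 0` outright.
  by_cases hint : IntervalIntegrable (fun s => f s (v s)) volume 0 T
  · refine tendsto_nhds_unique (tendsto_picardIter (continuous_uncurry_polyField b _)
      (by positivity)
      (fun s hs z w hz hw => norm_polyField_sub_le b (fun i => hbM i s hs) hR1 hz hw)
      (fun s _ => by simp [polyField]) hRT hv' hint (by linarith) ⟨hT.le, le_rfl⟩) ?_
    simp only [picardIter_polyField_apply_eq_self b _ hbT]
    exact tendsto_const_nhds
  · rw [hv' T ⟨hT.le, le_rfl⟩, intervalIntegral.integral_undef hint, add_zero]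

/-- **Section 2.2.**  A universal center is a center: if all basic iterated
integrals of a tuple `a` of continuous functions vanish, then the equation `E(a)`
determines a center. -/
theorem universal_center_is_center
    (T : ℝ) (hT : 0 < T) (n : ℕ) (hn : 1 ≤ n)
    (a : Fin n → ℝ → ℂ) (ha : ∀ i, ContinuousOn (a i) (Icc (0:ℝ) T))
    (hI : ∀ l : List (Fin n), l ≠ [] → iterInt T a l = 0) :
    DeterminesCenter T a :=
  universal_center_is_center_general T hT n a ha hI

end
end

section
/- Let T > 0 be a real number, n ≥ 2 an integer, and q_1,…,q_n ∈ ℂ[t,t^{-1}] Laurent polynomials. Suppose that for some index i with 2 ≤ i ≤ n the largest exponent of q_i with nonzero coefficient is positive and the smallest exponent with nonzero coefficient is negative. Then the map Ã : ℂ → ℂ^n defined by Ã(z) := (z + q_1(e^{2πiz/T}), q_2(e^{2πiz/T}),…, q_n(e^{2πiz/T})) is proper; in particular its image Ã(ℂ) is a closed subset of ℂ^n. -/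
/-! Put `w = exp (2πiz/T)`. As `q_i` has a positive top and a negative bottom exponent,
`‖q_i w‖ → ∞` both as `w → ∞` and as `w → 0`, so a bound on the `i`-th coordinate confines `w`
to a compact annulus around `0`. There `q₁` is bounded, so a bound on the first coordinate
`z + q₁ w` bounds `z`. Thus preimages of compact sets are closed and bounded, and a proper map
has closed range. -/

open Filter Topology Asymptotics Bornology

section NormedField

variable {𝕜 : Type*} [NormedField 𝕜]

def laurentEval (f : ℤ →₀ 𝕜) (w : 𝕜) : 𝕜 := ∑ j ∈ f.support, f j * w ^ j

theorem continuousOn_laurentEval (f : ℤ →₀ 𝕜) : ContinuousOn (laurentEval f) {0}ᶜ :=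
  continuousOn_finsetSum _ fun j _ =>
    continuousOn_const.mul (continuousOn_zpow₀ j)

theorem isLittleO_zpow_zpow_of_tendsto {l : Filter 𝕜} {j d : ℤ} (hl : ∀ᶠ w in l, w ≠ 0)
    (h : Tendsto (· ^ (j - d)) l (𝓝 0)) : (· ^ j) =o[l] (· ^ d) := by
  refine (isLittleO_iff_tendsto' (hl.mono fun w hw h0 => absurd h0 (zpow_ne_zero d hw))).2 ?_
  refine h.congr' (hl.mono fun w hw => ?_)
  simp [zpow_sub₀ hw]

theorem tendsto_norm_laurentEval_atTop {l : Filter 𝕜} (f : ℤ →₀ 𝕜) {d : ℤ} (hd : f d ≠ 0)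
    (hlo : ∀ j ∈ f.support, j ≠ d → (· ^ j) =o[l] (· ^ d))
    (hd_top : Tendsto (fun w => ‖w ^ d‖) l atTop) :
    Tendsto (fun w => ‖laurentEval f w‖) l atTop := by
  have hsplit : laurentEval f =
      (fun w => f d * w ^ d) + fun w => ∑ j ∈ f.support.erase d, f j * w ^ j := by
    ext w
    exact (Finset.add_sum_erase _ _ (Finsupp.mem_support_iff.2 hd)).symm
  have hrest : (fun w => ∑ j ∈ f.support.erase d, f j * w ^ j) =o[l] fun w => f d * w ^ d :=
    IsLittleO.fun_sum fun j hj => ((hlo j (Finset.mem_of_mem_erase hj)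
      (Finset.ne_of_mem_erase hj)).const_mul_left (f j)).trans_isBigO
      (isBigO_self_const_mul hd _ l)
  rw [hsplit]
  refine hrest.right_isBigO_add'.trans_tendsto_norm_atTop ?_
  simpa only [norm_mul] using hd_top.const_mul_atTop (norm_pos_iff.2 hd)

theorem tendsto_norm_laurentEval_cobounded (f : ℤ →₀ 𝕜) {d : ℤ} (hd : f d ≠ 0)
    (hmax : ∀ j, f j ≠ 0 → j ≤ d) (hd0 : 0 < d) :
    Tendsto (fun w => ‖laurentEval f w‖) (cobounded 𝕜) atTop := by
  refine tendsto_norm_laurentEval_atTop f hd (fun j hj hjd => ?_) ?_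
  · refine isLittleO_zpow_zpow_of_tendsto (eventually_ne_cobounded 0) ?_
    have hjd : j - d < 0 := by have := hmax j (Finsupp.mem_support_iff.1 hj); omega
    rw [tendsto_zero_iff_norm_tendsto_zero]
    simpa only [norm_zpow, Function.comp_def] using
      (tendsto_zpow_atTop_zero hjd).comp tendsto_norm_cobounded_atTop
  · simpa only [norm_zpow, Function.comp_def] using
      (tendsto_zpow_atTop_atTop hd0).comp tendsto_norm_cobounded_atTop

theorem tendsto_norm_laurentEval_nhdsNE_zero (f : ℤ →₀ 𝕜) {e : ℤ} (he : f e ≠ 0)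
    (hmin : ∀ j, f j ≠ 0 → e ≤ j) (he0 : e < 0) :
    Tendsto (fun w => ‖laurentEval f w‖) (𝓝[≠] 0) atTop := by
  refine tendsto_norm_laurentEval_atTop f he (fun j hj hje => ?_) ?_
  · refine isLittleO_zpow_zpow_of_tendsto self_mem_nhdsWithin ?_
    have hje : 0 < j - e := by have := hmin j (Finsupp.mem_support_iff.1 hj); omega
    simpa [zero_zpow _ hje.ne'] using
      ((continuousAt_zpow₀ (0 : 𝕜) (j - e) (Or.inr hje.le)).tendsto.mono_left nhdsWithin_le_nhds)
  · exact tendsto_norm_cobounded_atTop.comp (tendsto_zpow_nhdsNE_zero_cobounded he0)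

theorem exists_isCompact_forall_norm_le_mem [ProperSpace 𝕜] {G : Type*} [Norm G]
    {q : 𝕜 → G} (h₀ : Tendsto (fun w => ‖q w‖) (𝓝[≠] 0) atTop)
    (h_inf : Tendsto (fun w => ‖q w‖) (cobounded 𝕜) atTop) (R : ℝ) :
    ∃ K : Set 𝕜, IsCompact K ∧ (0 : 𝕜) ∉ K ∧ ∀ w ≠ 0, ‖q w‖ ≤ R → w ∈ K := by
  obtain ⟨a, ha, hsmall⟩ := Metric.eventually_nhds_iff.1
    (eventually_nhdsWithin_iff.1 (h₀.eventually_gt_atTop R))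
  obtain ⟨b, -, hlarge⟩ := hasBasis_cobounded_norm.eventually_iff.1 (h_inf.eventually_gt_atTop R)
  refine ⟨Metric.closedBall 0 b \ Metric.ball 0 a,
    (isCompact_closedBall 0 b).diff Metric.isOpen_ball, fun h => h.2 (Metric.mem_ball_self ha),
    fun w hw hR => ⟨?_, fun hwa => ?_⟩⟩
  · exact mem_closedBall_zero_iff.2
      (not_le.1 fun hb => (hlarge (show b ≤ ‖w‖ from hb)).not_ge hR).le
  · exact (hsmall hwa hw).not_ge hR

theorem isProperMap_of_coordinates [ProperSpace 𝕜] {ι : Type*} [Fintype ι] {F : 𝕜 → ι → 𝕜}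
    (hF : Continuous F) {E : 𝕜 → 𝕜} (hE : ∀ z, E z ≠ 0) {p q : 𝕜 → 𝕜} (hp : ContinuousOn p {0}ᶜ)
    (hq₀ : Tendsto (fun w => ‖q w‖) (𝓝[≠] 0) atTop)
    (hq_inf : Tendsto (fun w => ‖q w‖) (cobounded 𝕜) atTop) {i₀ i : ι}
    (hF₀ : ∀ z, F z i₀ = z + p (E z)) (hFi : ∀ z, F z i = q (E z)) : IsProperMap F := by
  refine isProperMap_iff_isCompact_preimage.2 ⟨hF, fun K hK => ?_⟩
  obtain ⟨R, hR⟩ := hK.isBounded.exists_norm_le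
  obtain ⟨L, hL, hL0, hqL⟩ := exists_isCompact_forall_norm_le_mem hq₀ hq_inf R
  obtain ⟨C, hC⟩ := hL.exists_bound_of_continuousOn
    (hp.mono fun w hw (h0 : w = 0) => hL0 (h0 ▸ hw))
  refine Metric.isCompact_of_isClosed_isBounded (hK.isClosed.preimage hF)
    (isBounded_iff_forall_norm_le.2 ⟨R + C, fun z hz => ?_⟩)
  have hFz : ∀ k, ‖F z k‖ ≤ R := fun k => (norm_le_pi_norm (F z) k).trans (hR _ hz)
  have hEz : E z ∈ L := hqL _ (hE z) (hFi z ▸ hFz i)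
  calc ‖z‖ = ‖F z i₀ - p (E z)‖ := by rw [hF₀, add_sub_cancel_right]
    _ ≤ ‖F z i₀‖ + ‖p (E z)‖ := norm_sub_le _ _
    _ ≤ R + C := add_le_add (hFz i₀) (hC _ hEz)

end NormedField

theorem exp_laurent_curve_proper_and_closed_general
    (T : ℝ) (n : ℕ)
    (c : Fin n → (ℤ →₀ ℂ))
    (hex : ∃ i : Fin n, i.val ≠ 0 ∧ ∃ d e : ℤ,
      c i d ≠ 0 ∧ (∀ j, c i j ≠ 0 → j ≤ d) ∧ 0 < d ∧
      c i e ≠ 0 ∧ (∀ j, c i j ≠ 0 → e ≤ j) ∧ e < 0) :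
    (∀ K : Set (Fin n → ℂ), IsCompact K →
      IsCompact ((fun z : ℂ => fun i : Fin n =>
        (if i.val = 0 then z else 0) +
          ∑ j ∈ (c i).support, c i j *
            Complex.exp (2 * (Real.pi : ℂ) * Complex.I * z / (T : ℂ)) ^ j) ⁻¹' K)) ∧
    IsClosed (Set.range (fun z : ℂ => fun i : Fin n =>
      (if i.val = 0 then z else 0) +
        ∑ j ∈ (c i).support, c i j *
          Complex.exp (2 * (Real.pi : ℂ) * Complex.I * z / (T : ℂ)) ^ j)) := by
  obtain ⟨i, hi0, d, e, hd, hdmax, hd0, he, hemin, he0⟩ := hex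
  set E : ℂ → ℂ := fun z => Complex.exp (2 * (Real.pi : ℂ) * Complex.I * z / (T : ℂ))
  have hE : ∀ z, E z ≠ 0 := fun z => Complex.exp_ne_zero _
  have hF : Continuous fun z : ℂ => fun k : Fin n =>
      (if k.val = 0 then z else 0) + laurentEval (c k) (E z) :=
    continuous_pi fun k => by
      refine Continuous.add (by split_ifs <;> fun_prop) ?_
      exact (continuousOn_laurentEval _).comp_continuous (by fun_prop) hE
  have hproper := isProperMap_of_coordinates hF hE (continuousOn_laurentEval (c ⟨0, i.pos⟩))
    (tendsto_norm_laurentEval_nhdsNE_zero _ he hemin he0)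
    (tendsto_norm_laurentEval_cobounded _ hd hdmax hd0) (i₀ := ⟨0, i.pos⟩) (i := i)
    (fun z => by simp) (fun z => by simp [hi0])
  exact ⟨fun K hK => hproper.isCompact_preimage hK, hproper.isClosedMap.isClosed_range⟩

/-- **Case (1) of Proposition 4.1.**  Let `q₁,…,q_n` be Laurent polynomials
(encoded by their finitely supported coefficient functions `c i : ℤ →₀ ℂ`) such
that for some `i ≠ 1` the top exponent of `q_i` is positive and the bottom
exponent is negative.  Then `Ã(z) = (z + q₁(e^{2πiz/T}), q₂(e^{2πiz/T}),…,
q_n(e^{2πiz/T})) : ℂ → ℂ^n` is proper; in particular its image is closed. -/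
theorem exp_laurent_curve_proper_and_closed
    (T : ℝ) (hT : 0 < T) (n : ℕ) (hn : 2 ≤ n)
    (c : Fin n → (ℤ →₀ ℂ))
    (hex : ∃ i : Fin n, i.val ≠ 0 ∧ ∃ d e : ℤ,
      c i d ≠ 0 ∧ (∀ j, c i j ≠ 0 → j ≤ d) ∧ 0 < d ∧
      c i e ≠ 0 ∧ (∀ j, c i j ≠ 0 → e ≤ j) ∧ e < 0) :
    (∀ K : Set (Fin n → ℂ), IsCompact K →
      IsCompact ((fun z : ℂ => fun i : Fin n =>
        (if i.val = 0 then z else 0) +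
          ∑ j ∈ (c i).support, c i j *
            Complex.exp (2 * (Real.pi : ℂ) * Complex.I * z / (T : ℂ)) ^ j) ⁻¹' K)) ∧
    IsClosed (Set.range (fun z : ℂ => fun i : Fin n =>
      (if i.val = 0 then z else 0) +
        ∑ j ∈ (c i).support, c i j *
          Complex.exp (2 * (Real.pi : ℂ) * Complex.I * z / (T : ℂ)) ^ j)) :=
  exp_laurent_curve_proper_and_closed_general T n c hex
end

section
/- Fix a real number T > 0 and an integer n ≥ 1. Let a = (a_1,…,a_n) be a tuple of bounded measurable functions [0,T] → ℂ such that ∫_0^T a_i(s) ds = 0 for every 1 ≤ i ≤ n, and let a^{-1} be the tuple with components a_i^{-1}(t) := −a_i(T−t). Then every moment changes sign under inversion: m^{n_1,…,n_j}_{i_1,…,i_{j+1}}(a^{-1}) = −m^{n_1,…,n_j}_{i_1,…,i_{j+1}}(a) for all j ≥ 0, all positive integers n_1,…,n_j and all indices i_1,…,i_{j+1} ∈ {1,…,n}. -/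
/-!
Substituting `s ↦ T - s`, the primitive of `a⁻¹ᵢ` at `s` is `ãᵢ(T - s) - ãᵢ(T)`, and `ãᵢ(T) = 0`
by the zero-mean hypothesis. So the integrand of `m(a⁻¹)` at `s` is minus the integrand of `m(a)`
at `T - s`, and the same substitution turns `m(a⁻¹)` into `-m(a)`.
-/

open MeasureTheory Set

noncomputable section

/-- Concatenation `a*b` of two coefficient functions. -/
def concatF (T : ℝ) (f g : ℝ → ℂ) : ℝ → ℂ :=
  fun t => if t ≤ T / 2 then 2 * f (2 * t) else 2 * g (2 * t - T)

/-- Inverse `a^{-1}` of a coefficient function. -/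
def invF (T : ℝ) (f : ℝ → ℂ) : ℝ → ℂ := fun t => -f (T - t)

theorem primitive_invF {T x : ℝ} {f : ℝ → ℂ} (hf : IntervalIntegrable f volume 0 T)
    (hx : x ∈ uIcc 0 T) :
    primitive (invF T f) x = primitive f (T - x) - ∫ s in (0:ℝ)..T, f s := by
  have hTx : T - x ∈ uIcc 0 T := by
    rw [mem_uIcc] at hx ⊢
    rcases hx with h | h <;> [left; right] <;> constructor <;> linarith [h.1, h.2]
  have hsplit := intervalIntegral.integral_interval_sub_left hf
    (hf.mono_set (uIcc_subset_uIcc_left hTx))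
  unfold primitive invF
  rw [intervalIntegral.integral_neg, intervalIntegral.integral_comp_sub_left f T, sub_zero,
    ← hsplit]
  ring

theorem moment_invF {T : ℝ} {n : ℕ} {a : Fin n → ℝ → ℂ}
    (ha : ∀ i, IntervalIntegrable (a i) volume 0 T) (hmean : ∀ i, ∫ s in (0:ℝ)..T, a i s = 0)
    (ps : List (Fin n × ℕ)) (i : Fin n) :
    moment T (fun i => invF T (a i)) ps i = -moment T a ps i := by
  set g : ℝ → ℂ := fun s => (ps.map fun q => primitive (a q.1) s ^ q.2).prod * a i s
  have hreflect : ∀ x ∈ uIcc 0 T,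
      (ps.map fun q => primitive (invF T (a q.1)) x ^ q.2).prod * invF T (a i) x = -g (T - x) := by
    intro x hx
    simp only [g, primitive_invF (ha _) hx, hmean, sub_zero, invF, mul_neg]
  calc moment T (fun i => invF T (a i)) ps i = ∫ x in (0:ℝ)..T, -g (T - x) :=
        intervalIntegral.integral_congr hreflect
    _ = -moment T a ps i := by
      rw [intervalIntegral.integral_neg, intervalIntegral.integral_comp_sub_left g T, sub_self,
        sub_zero]
      rfl

theorem moment_neg_on_inv_general
    (T : ℝ) (hT : 0 < T) (n : ℕ)
    (a : Fin n → ℝ → ℂ)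
    (hma : ∀ i, Measurable (a i))
    (hba : ∃ C : ℝ, ∀ i, ∀ x ∈ Icc (0:ℝ) T, ‖a i x‖ ≤ C)
    (hmean : ∀ i, (∫ s in (0:ℝ)..T, a i s) = 0) :
    ∀ (ps : List (Fin n × ℕ)), (∀ q ∈ ps, 0 < q.2) → ∀ i : Fin n,
      moment T (fun i => invF T (a i)) ps i = -moment T a ps i := by
  obtain ⟨C, hC⟩ := hba
  have ha : ∀ i, IntervalIntegrable (a i) volume 0 T := fun i =>
    (intervalIntegrable_iff_integrableOn_Icc_of_le hT.le).2 <|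
      Measure.integrableOn_of_bounded measure_Icc_lt_top.ne (hma i).aestronglyMeasurable
        ((ae_restrict_mem measurableSet_Icc).mono (hC i))
  exact fun ps _ i => moment_invF ha hmean ps i

/-- **Section 2.3.**  If the components of `a` have zero mean on `[0,T]`, then every
moment changes sign under inversion: `m(a⁻¹) = −m(a)`. -/
theorem moment_neg_on_inv
    (T : ℝ) (hT : 0 < T) (n : ℕ) (hn : 1 ≤ n)
    (a : Fin n → ℝ → ℂ)
    (hma : ∀ i, Measurable (a i))
    (hba : ∃ C : ℝ, ∀ i, ∀ x ∈ Icc (0:ℝ) T, ‖a i x‖ ≤ C)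
    (hmean : ∀ i, (∫ s in (0:ℝ)..T, a i s) = 0) :
    ∀ (ps : List (Fin n × ℕ)), (∀ q ∈ ps, 0 < q.2) → ∀ i : Fin n,
      moment T (fun i => invF T (a i)) ps i = -moment T a ps i :=
  moment_neg_on_inv_general T hT n a hma hba hmean

end
end
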